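/- arXiv:2002.09343 — 2 statements merged into one kernel-verified Lean document; each statement's English description precedes it below -/
import Mathlib

section
/- Let (Ω, P) be a probability space and G, Ĝ : Ω → 𝒢 random variables into a finite set 𝒢. Fix j ∈ 𝒢 with P(G = j) = P(Ĝ = j) > 0. Let p_j(A) = P(A | G = j) and p̂_j(A) = P(A | Ĝ = j) be the conditional measures. Then TV(p_j, p̂_j) ≤ P(G ≠ Ĝ | G = j). -/
open MeasureTheory ProbabilityTheory

/-- Total variation distance: sup over measurable sets of |p(A) - q(A)|. -/
noncomputable def tvDist {Ω : Type*} [MeasurableSpace Ω] (p q : Measure Ω) : ℝ :=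
  ⨆ A : {A : Set Ω // MeasurableSet A}, |(p A.1).toReal - (q A.1).toReal|

/-- If P(G = j) = P(Ĝ = j) > 0, then the TV distance between the conditional
measures P(·|G=j) and P(·|Ĝ=j) is bounded by P(G ≠ Ĝ | G = j). -/
theorem tv_cond_le_mismatch {Ω 𝒢 : Type*} [MeasurableSpace Ω]
    [MeasurableSpace 𝒢] [MeasurableSingletonClass 𝒢] [Fintype 𝒢]
    (P : Measure Ω) [IsProbabilityMeasure P]
    (G G' : Ω → 𝒢) (hG : Measurable G) (hG' : Measurable G')
    (j : 𝒢) (heq : P (G ⁻¹' {j}) = P (G' ⁻¹' {j})) (hpos : 0 < P (G ⁻¹' {j})) :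
    tvDist (P[|G ⁻¹' {j}]) (P[|G' ⁻¹' {j}])
      ≤ ((P[|G ⁻¹' {j}]) {ω | G ω ≠ G' ω}).toReal := by
  set B := G ⁻¹' {j} with hB
  set B' := G' ⁻¹' {j} with hB'
  have hmB : MeasurableSet B := hG (measurableSet_singleton j)
  have hmB' : MeasurableSet B' := hG' (measurableSet_singleton j)
  set D : Set Ω := {ω | G ω ≠ G' ω} with hD
  have hc : 0 < (P B).toReal :=
    ENNReal.toReal_pos hpos.ne' (measure_ne_top P B)
  -- symmetric difference measure equality
  have hdiff : P (B \ B') = P (B' \ B) := by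
    have h1 : P (B ∩ B') + P (B \ B') = P B := measure_inter_add_diff B hmB'
    have h2 : P (B' ∩ B) + P (B' \ B) = P B' := measure_inter_add_diff B' hmB
    rw [Set.inter_comm] at h2
    have : P (B ∩ B') + P (B \ B') = P (B ∩ B') + P (B' \ B) := by
      rw [h1, h2, heq]
    exact (ENNReal.add_right_inj (measure_ne_top P _)).mp this
  have hsubset : B \ B' ⊆ B ∩ D := by
    intro ω hω
    rcases hω with ⟨h1, h2⟩
    refine ⟨h1, fun hgg => h2 ?_⟩
    have hj : G ω = j := h1
    show G' ω ∈ ({j} : Set 𝒢)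
    rw [← hgg]
    exact hj
  have hmono : (P (B \ B')).toReal ≤ (P (B ∩ D)).toReal :=
    ENNReal.toReal_mono (measure_ne_top P _) (measure_mono hsubset)
  apply ciSup_le
  intro A
  have key : ∀ t : Set Ω, ((P[|B]) t).toReal = (P (B ∩ t)).toReal / (P B).toReal := by
    intro t
    rw [cond_apply hmB, ENNReal.toReal_mul, ENNReal.toReal_inv]
    ring
  have key' : ((P[|B']) A.1).toReal = (P (B' ∩ A.1)).toReal / (P B).toReal := by
    rw [cond_apply hmB', ENNReal.toReal_mul, ENNReal.toReal_inv, ← heq]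
    ring
  rw [key, key', key, div_sub_div_same, abs_div, abs_of_pos hc]
  gcongr
  rw [abs_le]
  have hx : P (B ∩ A.1) ≤ P (B' ∩ A.1) + P (B \ B') := by
    refine le_trans (measure_mono ?_) (measure_union_le _ _)
    intro ω ⟨h1, h2⟩
    by_cases h : ω ∈ B'
    · exact Or.inl ⟨h, h2⟩
    · exact Or.inr ⟨h1, h⟩
  have hy : P (B' ∩ A.1) ≤ P (B ∩ A.1) + P (B' \ B) := by
    refine le_trans (measure_mono ?_) (measure_union_le _ _)
    intro ω ⟨h1, h2⟩
    by_cases h : ω ∈ B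
    · exact Or.inl ⟨h, h2⟩
    · exact Or.inr ⟨h1, h⟩
  have hx' : (P (B ∩ A.1)).toReal ≤ (P (B' ∩ A.1)).toReal + (P (B \ B')).toReal := by
    rw [← ENNReal.toReal_add (measure_ne_top P _) (measure_ne_top P _)]
    exact ENNReal.toReal_mono (by finiteness) hx
  have hy' : (P (B' ∩ A.1)).toReal ≤ (P (B ∩ A.1)).toReal + (P (B \ B')).toReal := by
    rw [← ENNReal.toReal_add (measure_ne_top P _) (measure_ne_top P _), hdiff]
    exact ENNReal.toReal_mono (by finiteness) hy
  constructor <;> linarith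
end

section
/- Naive approach composite bound: let (Ω,P) be a probability space with random variables G, Ĝ into finite set 𝒢 and Z into a measurable space, with P(G=j) = P(Ĝ=j) > 0 and P(G ≠ Ĝ | G = j) ≤ γ_j for each j ∈ 𝒢. Let h be measurable with oscillation at most 1 (|h(z₁) − h(z₂)| ≤ 1). If E[h(Z) | Ĝ = j] ≤ 0 for all j, then E[h(Z) | G = j] ≤ γ_j for all j. -/
/-! Pick `c` with `c ≤ h ≤ c + 1`. Since `P(G = j) = P(Ĝ = j)`, replacing `h` by `g = h - c` shifts
both conditional expectations by the same constant, and for `0 ≤ g ≤ 1`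
`∫_{G = j} g ≤ ∫_{Ĝ = j} g + P(G = j, Ĝ ≠ j)`. The event `{G = j, Ĝ ≠ j}` lies in `{G ≠ Ĝ}`. -/

open MeasureTheory ProbabilityTheory Set

lemma exists_forall_mem_Icc_of_abs_sub_le_one {α : Type*} {f : α → ℝ}
    (hf : ∀ x y, |f x - f y| ≤ 1) : ∃ c, ∀ x, f x ∈ Icc c (c + 1) := by
  cases isEmpty_or_nonempty α with
  | inl _ => exact ⟨0, isEmptyElim⟩
  | inr hα =>
    have hbdd : BddBelow (range f) :=
      ⟨f hα.some - 1, by rintro _ ⟨y, rfl⟩; linarith [(abs_le.mp (hf hα.some y)).2]⟩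
    refine ⟨⨅ x, f x, fun x => ⟨ciInf_le hbdd x, ?_⟩⟩
    have : f x - 1 ≤ ⨅ y, f y := le_ciInf fun y => by linarith [(abs_le.mp (hf x y)).2]
    linarith

section

variable {Ω : Type*} [MeasurableSpace Ω] {μ : Measure Ω} {s t : Set Ω}

lemma integral_cond_eq_inv_mul_setIntegral (f : Ω → ℝ) (s : Set Ω) :
    ∫ x, f x ∂μ[|s] = (μ.real s)⁻¹ * ∫ x in s, f x ∂μ := by
  rw [ProbabilityTheory.cond, integral_smul_measure, ENNReal.toReal_inv, smul_eq_mul,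
    measureReal_def]

variable [IsFiniteMeasure μ]

lemma setIntegral_le_setIntegral_add_measureReal_sdiff {g : Ω → ℝ} (hg : Integrable g μ)
    (hg₀ : 0 ≤ g) (hg₁ : g ≤ 1) (ht : MeasurableSet t) :
    ∫ x in s, g x ∂μ ≤ ∫ x in t, g x ∂μ + μ.real (s \ t) := by
  rw [← integral_inter_add_sdiff ht hg.integrableOn]
  apply add_le_add
  · exact setIntegral_mono_set hg.integrableOn (ae_of_all _ hg₀) inter_subset_right.eventuallyLE
  · calc ∫ x in s \ t, g x ∂μ ≤ ∫ _ in s \ t, (1 : ℝ) ∂μ :=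
          setIntegral_mono hg.integrableOn (integrable_const 1).integrableOn hg₁
      _ = μ.real (s \ t) := by simp

lemma setIntegral_le_setIntegral_add_measureReal_sdiff_of_abs_sub_le_one {f : Ω → ℝ}
    (hf : AEStronglyMeasurable f μ) (hosc : ∀ x y, |f x - f y| ≤ 1) (hst : μ s = μ t)
    (ht : MeasurableSet t) :
    ∫ x in s, f x ∂μ ≤ ∫ x in t, f x ∂μ + μ.real (s \ t) := by
  obtain ⟨c, hc⟩ := exists_forall_mem_Icc_of_abs_sub_le_one hosc
  have hfi : Integrable f μ := .of_bound hf (max |c| |c + 1|)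
    (ae_of_all _ fun x => abs_le_max_abs_abs (hc x).1 (hc x).2)
  have hshift : ∀ u : Set Ω, ∫ x in u, f x ∂μ = ∫ x in u, (f x - c) ∂μ + μ.real u * c := by
    intro u
    rw [integral_sub hfi.integrableOn (integrable_const c).integrableOn, setIntegral_const,
      smul_eq_mul, sub_add_cancel]
  have key := setIntegral_le_setIntegral_add_measureReal_sdiff (s := s)
    (hfi.sub (integrable_const c)) (fun x => sub_nonneg.2 (hc x).1)
    (fun x => sub_le_iff_le_add'.2 (hc x).2) ht
  rw [hshift s, hshift t, measureReal_def, hst, ← measureReal_def]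
  simp only [Pi.sub_apply] at key
  linarith

lemma integral_cond_le_integral_cond_add_cond_compl_of_abs_sub_le_one {f : Ω → ℝ}
    (hf : AEStronglyMeasurable f μ) (hosc : ∀ x y, |f x - f y| ≤ 1) (hst : μ s = μ t)
    (ht : MeasurableSet t) :
    ∫ x, f x ∂μ[|s] ≤ ∫ x, f x ∂μ[|t] + (μ[|s]).real tᶜ := by
  have hreal : μ.real s = μ.real t := by simp only [measureReal_def, hst]
  have hcompl : (μ[|s]).real tᶜ = (μ.real s)⁻¹ * μ.real (s \ t) := by
    rw [measureReal_def, cond_apply' ht.compl, ENNReal.toReal_mul, ENNReal.toReal_inv,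
      ← sdiff_eq, measureReal_def, measureReal_def]
  rw [integral_cond_eq_inv_mul_setIntegral, integral_cond_eq_inv_mul_setIntegral, hcompl,
    ← hreal, ← mul_add]
  exact mul_le_mul_of_nonneg_left
    (setIntegral_le_setIntegral_add_measureReal_sdiff_of_abs_sub_le_one hf hosc hst ht)
    (inv_nonneg.2 measureReal_nonneg)

end

theorem naive_composite_bound_general {Ω 𝒢 X : Type*} [MeasurableSpace Ω]
    [MeasurableSpace 𝒢] [MeasurableSingletonClass 𝒢]
    [MeasurableSpace X]
    (P : Measure Ω) [IsProbabilityMeasure P]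
    (G G' : Ω → 𝒢) (hG : Measurable G) (hG' : Measurable G')
    (Z : Ω → X) (hZ : Measurable Z)
    (h : X → ℝ) (hmeas : Measurable h) (hosc : ∀ z₁ z₂, |h z₁ - h z₂| ≤ 1)
    (γ : 𝒢 → ℝ)
    (heq : ∀ j, P (G ⁻¹' {j}) = P (G' ⁻¹' {j}))
    (hnoise : ∀ j, ((P[|G ⁻¹' {j}]) {ω | G ω ≠ G' ω}).toReal ≤ γ j)
    (hfair : ∀ j, ∫ ω, h (Z ω) ∂(P[|G' ⁻¹' {j}]) ≤ 0) :
    ∀ j, ∫ ω, h (Z ω) ∂(P[|G ⁻¹' {j}]) ≤ γ j := by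
  intro j
  have hmislabel : (P[|G ⁻¹' {j}]).real (G' ⁻¹' {j})ᶜ ≤ (P[|G ⁻¹' {j}]).real {ω | G ω ≠ G' ω} :=
    ENNReal.toReal_mono (measure_ne_top _ _) <| measure_mono_ae <| by
      filter_upwards [ae_cond_mem (hG (measurableSet_singleton j))] with ω hGj hG'j
      exact fun hGG' => hG'j (hGG'.symm.trans hGj)
  calc ∫ ω, h (Z ω) ∂(P[|G ⁻¹' {j}])
      ≤ ∫ ω, h (Z ω) ∂(P[|G' ⁻¹' {j}]) + (P[|G ⁻¹' {j}]).real (G' ⁻¹' {j})ᶜ :=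
        integral_cond_le_integral_cond_add_cond_compl_of_abs_sub_le_one
          (hmeas.comp hZ).aestronglyMeasurable
          (fun ω ω' => hosc (Z ω) (Z ω')) (heq j) (hG' (measurableSet_singleton j))
    _ ≤ γ j := by linarith [hfair j, hmislabel.trans (hnoise j)]

/-- Naive approach composite bound: if the marginal group probabilities match,
the group-label noise is bounded by γ_j, h has oscillation at most 1, and the
fairness constraints hold conditionally on the noisy groups, then the
constraints hold conditionally on the true groups within slack γ_j. -/
theorem naive_composite_bound {Ω 𝒢 X : Type*} [MeasurableSpace Ω]
    [MeasurableSpace 𝒢] [MeasurableSingletonClass 𝒢] [Fintype 𝒢]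
    [MeasurableSpace X]
    (P : Measure Ω) [IsProbabilityMeasure P]
    (G G' : Ω → 𝒢) (hG : Measurable G) (hG' : Measurable G')
    (Z : Ω → X) (hZ : Measurable Z)
    (h : X → ℝ) (hmeas : Measurable h) (hosc : ∀ z₁ z₂, |h z₁ - h z₂| ≤ 1)
    (γ : 𝒢 → ℝ)
    (heq : ∀ j, P (G ⁻¹' {j}) = P (G' ⁻¹' {j}))
    (hpos : ∀ j, 0 < P (G ⁻¹' {j}))
    (hnoise : ∀ j, ((P[|G ⁻¹' {j}]) {ω | G ω ≠ G' ω}).toReal ≤ γ j)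
    (hfair : ∀ j, ∫ ω, h (Z ω) ∂(P[|G' ⁻¹' {j}]) ≤ 0) :
    ∀ j, ∫ ω, h (Z ω) ∂(P[|G ⁻¹' {j}]) ≤ γ j :=
  naive_composite_bound_general P G G' hG hG' Z hZ h hmeas hosc γ heq hnoise hfair
end
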